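/- Let Φ : C → C be an endofunctor and (L ⊣ R, η, ε) : C ⇄ D an adjunction. Set α := LΦη^{-1} : (LΦR)∘L ⇒ L∘Φ, a natural isomorphism defined on Fix_η(C) (where η is invertible), and β := ηΦR : Φ∘R ⇒ R∘(LΦR). Then (Alg_{L,α} ⊣ Alg_{R,β}, η, ε) : Alg(Φ)|Fix_η(C) ⇄ Alg(LΦR)|Fix_ε(D) is a well-defined adjoint equivalence whose unit and counit components are the components of η and ε. -/

import Mathlib

/-!
On `Fix_η(C)` the unit `η` is invertible, and by the triangle identities `L` and `R` restrict to
mutually inverse equivalences `Fix_η(C) ≃ Fix_ε(D)`. The transfer maps `α = LΦη⁻¹` and `β = ηΦR`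
are chosen precisely so that `η_X` and `ε_Y` become algebra homomorphisms; since the forgetful
functors from algebras are faithful and reflect isomorphisms, the triangle identities and the
invertibility of the unit and counit lift from `L ⊣ R`.
-/

open CategoryTheory

universe v₁ v₂ u₁ u₂

variable {C : Type u₁} [Category.{v₁} C] {D : Type u₂} [Category.{v₂} D]

/-- The restriction of the category of `Φ`-algebras to the full subcategory given by `P`. -/
abbrev AlgSub (Φ : C ⥤ C) (P : C → Prop) :=
  ObjectProperty.FullSubcategory (fun A : Endofunctor.Algebra Φ => P A.a)

/-- The lifted functor `Alg_{L,α}` sending `(X, a)` to `(LX, La ∘ α_X)` and `f` to `Lf`. -/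
def algMap (Φ : C ⥤ C) (Ψ : D ⥤ D) (P : C → Prop) (Q : D → Prop)
    (L : C ⥤ D) (hL : ∀ X : C, P X → Q (L.obj X))
    (α : ObjectProperty.ι P ⋙ L ⋙ Ψ ⟶ ObjectProperty.ι P ⋙ Φ ⋙ L) :
    AlgSub Φ P ⥤ AlgSub Ψ Q where
  obj A := ⟨⟨L.obj A.obj.a, α.app ⟨A.obj.a, A.property⟩ ≫ L.map A.obj.str⟩, hL _ A.property⟩
  map {A B} f :=
    InducedCategory.homMk
    { f := L.map (Endofunctor.Algebra.Hom.f f.hom)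
      h := by
        have hn := α.naturality (X := ⟨A.obj.a, A.property⟩) (Y := ⟨B.obj.a, B.property⟩)
          (InducedCategory.homMk (Endofunctor.Algebra.Hom.f f.hom))
        have hf := Endofunctor.Algebra.Hom.h f.hom
        dsimp at hn ⊢
        change Ψ.map (L.map f.hom.f) ≫ _ = _ ≫ L.map (Φ.map f.hom.f) at hn
        rw [← Category.assoc, hn, Category.assoc, ← L.map_comp, hf, L.map_comp, Category.assoc] }
  map_id A := by
    apply ObjectProperty.hom_ext
    apply Endofunctor.Algebra.ext
    show L.map (𝟙 A.obj.a) = 𝟙 (L.obj A.obj.a)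
    simp
  map_comp {A B E} f g := by
    apply ObjectProperty.hom_ext
    apply Endofunctor.Algebra.ext
    show L.map (Endofunctor.Algebra.Hom.f f.hom ≫ Endofunctor.Algebra.Hom.f g.hom) =
      L.map (Endofunctor.Algebra.Hom.f f.hom) ≫ L.map (Endofunctor.Algebra.Hom.f g.hom)
    simp

/-- `L` maps `Fix_η(C)` into `Fix_ε(D)`. -/
theorem isIso_counit_app_of_isIso_unit_app {L : C ⥤ D} {R : D ⥤ C} (adj : L ⊣ R)
    (X : C) (h : IsIso (adj.unit.app X)) : IsIso (adj.counit.app (L.obj X)) := by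
  haveI := h
  haveI : IsIso (L.map (adj.unit.app X) ≫ adj.counit.app (L.obj X)) := by
    rw [adj.left_triangle_components X]; exact IsIso.id _
  exact IsIso.of_isIso_comp_left (L.map (adj.unit.app X)) (adj.counit.app (L.obj X))

/-- `R` maps `Fix_ε(D)` into `Fix_η(C)`. -/
theorem isIso_unit_app_of_isIso_counit_app {L : C ⥤ D} {R : D ⥤ C} (adj : L ⊣ R)
    (Y : D) (h : IsIso (adj.counit.app Y)) : IsIso (adj.unit.app (R.obj Y)) := by
  haveI := h
  haveI : IsIso (adj.unit.app (R.obj Y) ≫ R.map (adj.counit.app Y)) := by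
    rw [adj.right_triangle_components Y]; exact IsIso.id _
  exact IsIso.of_isIso_comp_right (adj.unit.app (R.obj Y)) (R.map (adj.counit.app Y))

namespace AlgSub

variable {Φ : C ⥤ C} {P : C → Prop} {A B : AlgSub Φ P}

theorem hom_ext {f g : A ⟶ B} (h : f.hom.f = g.hom.f) : f = g :=
  ObjectProperty.hom_ext _ (Endofunctor.Algebra.Hom.ext h)

theorem isIso_of_isIso_f (f : A ⟶ B) (hf : IsIso f.hom.f) : IsIso f :=
  (ObjectProperty.isIso_hom_iff f).mp (Endofunctor.Algebra.iso_of_iso f.hom)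

end AlgSub

namespace CategoryTheory.Adjunction

variable {Φ : C ⥤ C} {L : C ⥤ D} {R : D ⥤ C} (adj : L ⊣ R)

theorem inv_unit_app_obj (Y : D) [IsIso (adj.unit.app (R.obj Y))] :
    inv (adj.unit.app (R.obj Y)) = R.map (adj.counit.app Y) :=
  IsIso.inv_eq_of_hom_inv_id (adj.right_triangle_components Y)

/-- `η_X` is an algebra map `(X, a) ⟶ Alg_{R,β} (Alg_{L,α} (X, a))`, written out. -/
theorem unit_app_comm_str (X : C) [IsIso (adj.unit.app X)] (a : Φ.obj X ⟶ X) :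
    Φ.map (adj.unit.app X) ≫ adj.unit.app (Φ.obj (R.obj (L.obj X))) ≫
        R.map (L.map (Φ.map (inv (adj.unit.app X))) ≫ L.map a) =
      a ≫ adj.unit.app X := by
  calc _ = adj.unit.app (Φ.obj X) ≫
          R.map (L.map (Φ.map (adj.unit.app X ≫ inv (adj.unit.app X))) ≫ L.map a) := by
        simp only [Functor.map_comp, Category.assoc]
        exact adj.unit.naturality_assoc _ _
    _ = a ≫ adj.unit.app X := by simp

/-- `ε_Y` is an algebra map `Alg_{L,α} (Alg_{R,β} (Y, b)) ⟶ (Y, b)`, written out. -/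
theorem counit_app_comm_str (Y : D) [IsIso (adj.unit.app (R.obj Y))]
    (b : L.obj (Φ.obj (R.obj Y)) ⟶ Y) :
    L.map (Φ.map (R.map (adj.counit.app Y))) ≫ b =
      (L.map (Φ.map (inv (adj.unit.app (R.obj Y)))) ≫
        L.map (adj.unit.app (Φ.obj (R.obj Y)) ≫ R.map b)) ≫ adj.counit.app Y := by
  simp [inv_unit_app_obj]

end CategoryTheory.Adjunction

section AlgebraAdjunction

variable {Φ : C ⥤ C} {L : C ⥤ D} {R : D ⥤ C} (adj : L ⊣ R)
  (α : ObjectProperty.ι (fun X : C => IsIso (adj.unit.app X)) ⋙ L ⋙ (R ⋙ Φ ⋙ L) ⟶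
    ObjectProperty.ι (fun X : C => IsIso (adj.unit.app X)) ⋙ Φ ⋙ L)
  (hα : ∀ X : ObjectProperty.FullSubcategory (fun X : C => IsIso (adj.unit.app X)),
    α.app X = L.map (Φ.map (@CategoryTheory.inv _ _ _ _ (adj.unit.app X.obj) X.property)))
  (β : ObjectProperty.ι (fun Y : D => IsIso (adj.counit.app Y)) ⋙ R ⋙ Φ ⟶
    ObjectProperty.ι (fun Y : D => IsIso (adj.counit.app Y)) ⋙ (R ⋙ Φ ⋙ L) ⋙ R)
  (hβ : ∀ Y : ObjectProperty.FullSubcategory (fun Y : D => IsIso (adj.counit.app Y)),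
    β.app Y = adj.unit.app (Φ.obj (R.obj Y.obj)))

def algAdjunction :
    algMap Φ (R ⋙ Φ ⋙ L) _ _ L (fun X => isIso_counit_app_of_isIso_unit_app adj X) α ⊣
      algMap (R ⋙ Φ ⋙ L) Φ _ _ R (fun Y => isIso_unit_app_of_isIso_counit_app adj Y) β where
  unit :=
    { app A := InducedCategory.homMk
        { f := adj.unit.app A.obj.a
          h := by
            have := A.property
            dsimp [algMap]
            rw [hα, hβ]
            exact adj.unit_app_comm_str A.obj.a A.obj.str }
      naturality _ _ f := AlgSub.hom_ext (adj.unit.naturality f.hom.f) }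
  counit :=
    { app B := InducedCategory.homMk
        { f := adj.counit.app B.obj.a
          h := by
            have := isIso_unit_app_of_isIso_counit_app adj B.obj.a B.property
            dsimp [algMap]
            rw [hα, hβ]
            exact adj.counit_app_comm_str B.obj.a B.obj.str }
      naturality _ _ f := AlgSub.hom_ext (adj.counit.naturality f.hom.f) }
  left_triangle_components A := AlgSub.hom_ext (adj.left_triangle_components A.obj.a)
  right_triangle_components B := AlgSub.hom_ext (adj.right_triangle_components B.obj.a)

end AlgebraAdjunction

theorem stmt4 (Φ : C ⥤ C) (L : C ⥤ D) (R : D ⥤ C) (adj : L ⊣ R)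
    (α : ObjectProperty.ι (fun X : C => IsIso (adj.unit.app X)) ⋙ L ⋙ (R ⋙ Φ ⋙ L) ⟶
         ObjectProperty.ι (fun X : C => IsIso (adj.unit.app X)) ⋙ Φ ⋙ L)
    (hα : ∀ X : ObjectProperty.FullSubcategory (fun X : C => IsIso (adj.unit.app X)),
      α.app X = L.map (Φ.map (@CategoryTheory.inv _ _ _ _ (adj.unit.app X.obj) X.property)))
    (β : ObjectProperty.ι (fun Y : D => IsIso (adj.counit.app Y)) ⋙ R ⋙ Φ ⟶
         ObjectProperty.ι (fun Y : D => IsIso (adj.counit.app Y)) ⋙ (R ⋙ Φ ⋙ L) ⋙ R)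
    (hβ : ∀ Y : ObjectProperty.FullSubcategory (fun Y : D => IsIso (adj.counit.app Y)),
      β.app Y = adj.unit.app (Φ.obj (R.obj Y.obj))) :
    ∃ adj' : algMap Φ (R ⋙ Φ ⋙ L) _ _ L (fun X => isIso_counit_app_of_isIso_unit_app adj X) α ⊣
             algMap (R ⋙ Φ ⋙ L) Φ _ _ R (fun Y => isIso_unit_app_of_isIso_counit_app adj Y) β,
      (∀ A : AlgSub Φ (fun X : C => IsIso (adj.unit.app X)),
        Endofunctor.Algebra.Hom.f (adj'.unit.app A).hom = adj.unit.app A.obj.a) ∧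
      (∀ B : AlgSub (R ⋙ Φ ⋙ L) (fun Y : D => IsIso (adj.counit.app Y)),
        Endofunctor.Algebra.Hom.f (adj'.counit.app B).hom = adj.counit.app B.obj.a) ∧
      IsIso adj'.unit ∧ IsIso adj'.counit := by
  let adj' := algAdjunction adj α hα β hβ
  refine ⟨adj', fun _ => rfl, fun _ => rfl, ?_, ?_⟩
  · have (A : AlgSub Φ (fun X : C => IsIso (adj.unit.app X))) : IsIso (adj'.unit.app A) :=
      AlgSub.isIso_of_isIso_f _ A.property
    exact NatIso.isIso_of_isIso_app _
  · have (B : AlgSub (R ⋙ Φ ⋙ L) (fun Y : D => IsIso (adj.counit.app Y))) :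
        IsIso (adj'.counit.app B) :=
      AlgSub.isIso_of_isIso_f _ B.property
    exact NatIso.isIso_of_isIso_app _
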